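/- arXiv:math/0701632 — 4 statements merged into one kernel-verified Lean document; each statement's English description precedes it below -/
import Mathlib

section
/- Let N ≥ 1. Let (A_n) be a sequence of N×N real row-stochastic matrices converging entrywise to a row-stochastic matrix A. Assume that the kernel of I − A (acting on column vectors) is exactly the one-dimensional span of the all-ones vector 𝟙 ∈ ℝ^N, and let π be a row vector with πA = π and π𝟙 = 1. Let (B_n) be N×N real matrices such that n·B_n converges entrywise to a matrix B̃ with πB̃𝟙 ≠ 0, and let (V_n) be column vectors in ℝ^N such that n·V_n converges to a vector Ṽ. Then for all sufficiently large n the matrix I − A_n + B_n is invertible, and (I − A_n + B_n)^{−1} V_n converges, as n → ∞, to the vector ((πṼ)/(πB̃𝟙))·𝟙 (i.e., every component converges to the same scalar (πṼ)/(πB̃𝟙)). -/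
/-! Let `P = 𝟙π`. Since `Aₙ𝟙 = 𝟙`, `(I - Aₙ + Bₙ)P = Bₙ𝟙π`, so stretching the `𝟙`-direction by `n`
gives `(I - Aₙ + Bₙ)(I + nP) → H = I - A + (B̃𝟙)π`. The matrix `H` is invertible: `πH = (πB̃𝟙)π`
forces `πx = 0` on `ker H`, hence `ker H ⊆ ker (I - A) ∩ ker π = 0`. With `uₙ = Hₙ⁻¹Vₙ`, where
`Hₙ = (I - Aₙ + Bₙ)(I + nP)`, we get `(I - Aₙ + Bₙ)⁻¹Vₙ = uₙ + π(n uₙ)𝟙` with `uₙ → 0` and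
`n uₙ → H⁻¹Ṽ`, and `πH⁻¹Ṽ = πṼ / πB̃𝟙`. -/

open Matrix Filter Topology

theorem tendsto_zero_of_tendsto_natCast_smul {E : Type*} [AddCommGroup E] [Module ℝ E]
    [TopologicalSpace E] [ContinuousSMul ℝ E] {x : ℕ → E} {L : E}
    (h : Tendsto (fun n : ℕ => (n : ℝ) • x n) atTop (𝓝 L)) : Tendsto x atTop (𝓝 0) := by
  have h0 := (tendsto_inv_atTop_zero.comp (tendsto_natCast_atTop_atTop (R := ℝ))).smul h
  rw [zero_smul] at h0
  refine h0.congr' ?_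
  filter_upwards [eventually_ne_atTop 0] with n hn
  simp [smul_smul, hn]

section MatrixTopology

variable {α ι R : Type*} [Fintype ι] [TopologicalSpace R] {l : Filter α}

theorem Filter.Tendsto.matrix_mulVec [NonUnitalNonAssocSemiring R] [ContinuousAdd R]
    [ContinuousMul R] {M : α → Matrix ι ι R} {v : α → ι → R} {H : Matrix ι ι R} {u : ι → R}
    (hM : Tendsto M l (𝓝 H)) (hv : Tendsto v l (𝓝 u)) :
    Tendsto (fun a => M a *ᵥ v a) l (𝓝 (H *ᵥ u)) :=
  ((continuous_fst.matrix_mulVec continuous_snd).tendsto _).comp (hM.prodMk_nhds hv)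

theorem Filter.Tendsto.matrix_inv [DecidableEq ι] [Field R] [IsTopologicalRing R]
    [ContinuousInv₀ R] {M : α → Matrix ι ι R} {H : Matrix ι ι R}
    (hM : Tendsto M l (𝓝 H)) (hH : H.det ≠ 0) : Tendsto (fun a => (M a)⁻¹) l (𝓝 H⁻¹) := by
  have hinv : ContinuousAt Ring.inverse H.det := by
    rw [Ring.inverse_eq_inv']
    exact continuousAt_inv₀ hH
  exact (continuousAt_matrix_inv H hinv).tendsto.comp hM

end MatrixTopology

namespace Matrix

variable {ι K : Type*} [Fintype ι]

theorem vecMul_add_vecMulVec [CommRing K] {L : Matrix ι ι K} {w π : ι → K}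
    (hπL : π ᵥ* L = 0) : π ᵥ* (L + vecMulVec w π) = (π ⬝ᵥ w) • π := by
  rw [vecMul_add, hπL, vecMul_vecMulVec, zero_add]

variable [DecidableEq ι]

theorem inv_eq_mul_inv_mul [CommRing K] {M S : Matrix ι ι K} (h : IsUnit (M * S).det) :
    M⁻¹ = S * (M * S)⁻¹ := by
  have hM : IsUnit M.det := isUnit_of_mul_isUnit_left (det_mul M S ▸ h)
  calc M⁻¹ = M⁻¹ * ((M * S) * (M * S)⁻¹) := by rw [mul_nonsing_inv _ h, Matrix.mul_one]
    _ = S * (M * S)⁻¹ := by rw [← Matrix.mul_assoc, nonsing_inv_mul_cancel_left _ _ hM]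

theorem one_sub_add_mul_one_add_smul_vecMulVec [CommRing K] {A B : Matrix ι ι K} {e π : ι → K}
    (hAe : A *ᵥ e = e) (r : K) :
    (1 - A + B) * (1 + r • vecMulVec e π) = 1 - A + B + vecMulVec ((r • B) *ᵥ e) π := by
  rw [Matrix.mul_add, Matrix.mul_one, Matrix.mul_smul, mul_vecMulVec, add_mulVec, sub_mulVec,
    one_mulVec, hAe, sub_self, zero_add, smul_mulVec, smul_vecMulVec]

variable [Field K]

theorem dotProduct_inv_mulVec_of_vecMul_eq_smul {H : Matrix ι ι K} {π : ι → K} {β : K}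
    (hH : IsUnit H.det) (hπH : π ᵥ* H = β • π) (hβ : β ≠ 0) (v : ι → K) :
    π ⬝ᵥ (H⁻¹ *ᵥ v) = (π ⬝ᵥ v) / β := by
  rw [eq_div_iff hβ]
  calc π ⬝ᵥ (H⁻¹ *ᵥ v) * β = (π ᵥ* H) ⬝ᵥ (H⁻¹ *ᵥ v) := by
        rw [hπH, smul_dotProduct, smul_eq_mul, mul_comm]
    _ = π ⬝ᵥ v := by rw [← dotProduct_mulVec, mulVec_mulVec, mul_nonsing_inv _ hH, one_mulVec]

theorem det_add_vecMulVec_ne_zero {L : Matrix ι ι K} {e w π : ι → K}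
    (hker : ∀ x, L *ᵥ x = 0 → ∃ c : K, x = c • e)
    (hπL : π ᵥ* L = 0) (hπe : π ⬝ᵥ e ≠ 0) (hπw : π ⬝ᵥ w ≠ 0) :
    (L + vecMulVec w π).det ≠ 0 := by
  intro hdet
  obtain ⟨x, hx0, hx⟩ := exists_mulVec_eq_zero_iff.2 hdet
  have hπx : π ⬝ᵥ x = 0 := by
    have h := congrArg (π ⬝ᵥ ·) hx
    simp only [dotProduct_mulVec, vecMul_add_vecMulVec hπL, smul_dotProduct, smul_eq_mul,
      dotProduct_zero, mul_eq_zero, hπw, false_or] at h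
    exact h
  obtain ⟨c, rfl⟩ := hker x (by simpa [add_mulVec, vecMulVec_mulVec, hπx] using hx)
  rw [dotProduct_smul, smul_eq_mul, mul_eq_zero] at hπx
  exact hx0 (by simp [hπx.resolve_right hπe])

end Matrix

theorem tendsto_inv_mulVec_of_tendsto_mul_one_add_smul_vecMulVec {ι : Type*} [Fintype ι]
    [DecidableEq ι] {M : ℕ → Matrix ι ι ℝ} {H : Matrix ι ι ℝ} {e π : ι → ℝ} {V : ℕ → ι → ℝ}
    {Vt : ι → ℝ} (hM : Tendsto (fun n : ℕ => M n * (1 + (n : ℝ) • vecMulVec e π)) atTop (𝓝 H))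
    (hH : H.det ≠ 0) (hV : Tendsto (fun n : ℕ => (n : ℝ) • V n) atTop (𝓝 Vt)) :
    (∀ᶠ n in atTop, IsUnit (M n).det) ∧
      Tendsto (fun n => (M n)⁻¹ *ᵥ V n) atTop (𝓝 ((π ⬝ᵥ (H⁻¹ *ᵥ Vt)) • e)) := by
  set S : ℕ → Matrix ι ι ℝ := fun n => 1 + (n : ℝ) • vecMulVec e π
  have hunit : ∀ᶠ n in atTop, IsUnit (M n * S n).det :=
    (((continuous_id.matrix_det.tendsto H).comp hM).eventually_ne hH).mono fun _ => IsUnit.mk0 _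
  set u := fun n => (M n * S n)⁻¹ *ᵥ V n
  have hnu : Tendsto (fun n : ℕ => (n : ℝ) • u n) atTop (𝓝 (H⁻¹ *ᵥ Vt)) := by
    simpa only [u, mulVec_smul] using (hM.matrix_inv hH).matrix_mulVec hV
  have hlim : Tendsto (fun n : ℕ => u n + (π ⬝ᵥ ((n : ℝ) • u n)) • e) atTop
      (𝓝 ((π ⬝ᵥ (H⁻¹ *ᵥ Vt)) • e)) := by
    simpa using (tendsto_zero_of_tendsto_natCast_smul hnu).add
      ((((continuous_const.dotProduct continuous_id).tendsto _).comp hnu).smul_const e)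
  refine ⟨hunit.mono fun n h => isUnit_of_mul_isUnit_left (det_mul (M n) (S n) ▸ h),
    hlim.congr' ?_⟩
  filter_upwards [hunit] with n hn
  rw [inv_eq_mul_inv_mul hn, ← mulVec_mulVec]
  change _ = S n *ᵥ u n
  simp only [S, add_mulVec, one_mulVec, smul_mulVec, vecMulVec_mulVec, op_smul_eq_smul,
    dotProduct_smul, smul_smul, smul_eq_mul]

theorem stochastic_matrix_resolvent_limit_general
    (N : ℕ)
    (A : ℕ → Matrix (Fin N) (Fin N) ℝ) (Alim : Matrix (Fin N) (Fin N) ℝ)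
    (hAstoch : ∀ n, (∀ i j, 0 ≤ A n i j) ∧ ∀ i, ∑ j, A n i j = 1)
    (hAconv : ∀ i j, Tendsto (fun n => A n i j) atTop (𝓝 (Alim i j)))
    (hker : ∀ x : Fin N → ℝ, (1 - Alim) *ᵥ x = 0 ↔ ∃ c : ℝ, x = fun _ => c)
    (π : Fin N → ℝ) (hπA : π ᵥ* Alim = π) (hπ1 : π ⬝ᵥ (fun _ => (1 : ℝ)) = 1)
    (B : ℕ → Matrix (Fin N) (Fin N) ℝ) (Bt : Matrix (Fin N) (Fin N) ℝ)
    (hB : ∀ i j, Tendsto (fun n : ℕ => (n : ℝ) * B n i j) atTop (𝓝 (Bt i j)))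
    (hBt : π ⬝ᵥ (Bt *ᵥ fun _ => (1 : ℝ)) ≠ 0)
    (V : ℕ → Fin N → ℝ) (Vt : Fin N → ℝ)
    (hV : ∀ i, Tendsto (fun n : ℕ => (n : ℝ) * V n i) atTop (𝓝 (Vt i))) :
    (∃ n₀ : ℕ, ∀ n ≥ n₀, IsUnit (1 - A n + B n).det) ∧
    ∀ i, Tendsto (fun n => ((1 - A n + B n)⁻¹ *ᵥ V n) i) atTop
      (𝓝 ((π ⬝ᵥ Vt) / (π ⬝ᵥ (Bt *ᵥ fun _ => (1 : ℝ))))) := by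
  set e : Fin N → ℝ := fun _ => 1
  have hA : Tendsto A atTop (𝓝 Alim) := tendsto_pi_nhds.2 fun i => tendsto_pi_nhds.2 (hAconv i)
  have hnB : Tendsto (fun n : ℕ => (n : ℝ) • B n) atTop (𝓝 Bt) :=
    tendsto_pi_nhds.2 fun i => tendsto_pi_nhds.2 (hB i)
  have hnV : Tendsto (fun n : ℕ => (n : ℝ) • V n) atTop (𝓝 Vt) := tendsto_pi_nhds.2 hV
  have hAe : ∀ n, A n *ᵥ e = e := fun n =>
    funext fun i => by simp [e, mulVec, dotProduct, (hAstoch n).2 i]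
  have hker_smul : ∀ x, (1 - Alim) *ᵥ x = 0 → ∃ c : ℝ, x = c • e := fun x hx => by
    obtain ⟨c, rfl⟩ := (hker x).1 hx
    exact ⟨c, funext fun _ => (mul_one c).symm⟩
  have hπL : π ᵥ* (1 - Alim) = 0 := by rw [vecMul_sub, vecMul_one, hπA, sub_self]
  set H := 1 - Alim + vecMulVec (Bt *ᵥ e) π
  have hH : H.det ≠ 0 := det_add_vecMulVec_ne_zero hker_smul hπL (hπ1 ▸ one_ne_zero) hBt
  have hlim : Tendsto (fun n : ℕ => (1 - A n + B n) * (1 + (n : ℝ) • vecMulVec e π)) atTop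
      (𝓝 H) := by
    simp_rw [one_sub_add_mul_one_add_smul_vecMulVec (hAe _)]
    simpa using ((tendsto_const_nhds.sub hA).add (tendsto_zero_of_tendsto_natCast_smul hnB)).add
      (((by fun_prop : Continuous fun X : Matrix (Fin N) (Fin N) ℝ => vecMulVec (X *ᵥ e) π).tendsto
        Bt).comp hnB)
  obtain ⟨hunit, hconv⟩ := tendsto_inv_mulVec_of_tendsto_mul_one_add_smul_vecMulVec hlim hH hnV
  have hvalue : π ⬝ᵥ (H⁻¹ *ᵥ Vt) = (π ⬝ᵥ Vt) / (π ⬝ᵥ (Bt *ᵥ e)) :=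
    dotProduct_inv_mulVec_of_vecMul_eq_smul (IsUnit.mk0 _ hH) (vecMul_add_vecMulVec hπL) hBt Vt
  refine ⟨eventually_atTop.1 hunit, fun i => ?_⟩
  simpa [hvalue, e] using tendsto_pi_nhds.1 hconv i

/-- limit of `(I - Aₙ + Bₙ)⁻¹ Vₙ` for row-stochastic `Aₙ → A` with
one-dimensional kernel of `I - A`, `n·Bₙ → B̃` with `π B̃ 𝟙 ≠ 0`, and `n·Vₙ → Ṽ`. -/
theorem stochastic_matrix_resolvent_limit
    (N : ℕ) (hN : 1 ≤ N)
    (A : ℕ → Matrix (Fin N) (Fin N) ℝ) (Alim : Matrix (Fin N) (Fin N) ℝ)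
    (hAstoch : ∀ n, (∀ i j, 0 ≤ A n i j) ∧ ∀ i, ∑ j, A n i j = 1)
    (hAlimstoch : (∀ i j, 0 ≤ Alim i j) ∧ ∀ i, ∑ j, Alim i j = 1)
    (hAconv : ∀ i j, Tendsto (fun n => A n i j) atTop (𝓝 (Alim i j)))
    (hker : ∀ x : Fin N → ℝ, (1 - Alim) *ᵥ x = 0 ↔ ∃ c : ℝ, x = fun _ => c)
    (π : Fin N → ℝ) (hπA : π ᵥ* Alim = π) (hπ1 : π ⬝ᵥ (fun _ => (1 : ℝ)) = 1)
    (B : ℕ → Matrix (Fin N) (Fin N) ℝ) (Bt : Matrix (Fin N) (Fin N) ℝ)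
    (hB : ∀ i j, Tendsto (fun n : ℕ => (n : ℝ) * B n i j) atTop (𝓝 (Bt i j)))
    (hBt : π ⬝ᵥ (Bt *ᵥ fun _ => (1 : ℝ)) ≠ 0)
    (V : ℕ → Fin N → ℝ) (Vt : Fin N → ℝ)
    (hV : ∀ i, Tendsto (fun n : ℕ => (n : ℝ) * V n i) atTop (𝓝 (Vt i))) :
    (∃ n₀ : ℕ, ∀ n ≥ n₀, IsUnit (1 - A n + B n).det) ∧
    ∀ i, Tendsto (fun n => ((1 - A n + B n)⁻¹ *ᵥ V n) i) atTop
      (𝓝 ((π ⬝ᵥ Vt) / (π ⬝ᵥ (Bt *ᵥ fun _ => (1 : ℝ))))) :=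
  stochastic_matrix_resolvent_limit_general N A Alim hAstoch hAconv hker π hπA hπ1 B Bt hB hBt V Vt
    hV
end

section
/- Fix λ > 0 and set s = √(2λ). Let M ≥ 1, 0 ≤ m < M, let p_1,…,p_M ≥ 0 with Σ_{j=1}^M p_j = 1, let l_1,…,l_m > 0, fix k ∈ {m+1,…,M}, and let φ₀, Φ, G ∈ ℝ. For x ≥ 0 define S(x) = 1/cosh(xs), R_j(x) = sinh((l_j − x)s)/sinh(l_j s) for 1 ≤ j ≤ m, and R_j(x) = e^{−xs} for m < j ≤ M. Suppose Ψ : [0, δ) → ℝ (δ > 0) is right-differentiable at 0 with right derivative Ψ′(0) = Φ·s, and suppose that for all x ∈ [0, δ): G = (p_k φ₀/λ)(1 − S(x)) + p_k S(x)Ψ(x) + G·Σ_{j=1}^M p_j S(x) R_j(x). Then G = p_k Φ / (Σ_{j=1}^m p_j coth(l_j s) + Σ_{j=m+1}^M p_j). -/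
/-!
Both sides of the renewal identity are right-differentiable at `0`, and the left side is
constant, so the right derivative of the right side vanishes. Since `1 / cosh (x s)` is even,
its derivative at `0` is zero and only `Ψ` and the ray factors contribute:
`p_k Φ s - G s Σ_j p_j c_j = 0`, where `c_j = coth (l_j s)` on the marked rays and `c_j = 1`
on the others. Positivity of `s` and `Σ_j p_j c_j ≥ Σ_j p_j = 1` then let us solve for `G`.
-/

open Real Finset

/-- The factor `R_j` of the renewal identity. -/
noncomputable def rayFactor (m : ℕ) (l : ℕ → ℝ) (s : ℝ) (j : ℕ) (x : ℝ) : ℝ :=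
  if j ≤ m then sinh ((l j - x) * s) / sinh (l j * s) else exp (-(x * s))

/-- `-R_j'(0) / s`. -/
noncomputable def rayCoeff (m : ℕ) (l : ℕ → ℝ) (s : ℝ) (j : ℕ) : ℝ :=
  if j ≤ m then cosh (l j * s) / sinh (l j * s) else 1

theorem HasDerivWithinAt.eq_zero_of_eqOn_Ico {f : ℝ → ℝ} {f' a b c : ℝ} (hab : a < b)
    (hf : HasDerivWithinAt f f' (Set.Ici a) a) (hc : Set.EqOn f (fun _ => c) (Set.Ico a b)) :
    f' = 0 := by
  have hconst : HasDerivWithinAt f 0 (Set.Ici a) a :=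
    (hasDerivWithinAt_const a _ c).congr_of_eventuallyEq
      (Filter.eventuallyEq_of_mem (Ico_mem_nhdsGE hab) hc) (hc ⟨le_rfl, hab⟩)
  exact (uniqueDiffOn_Ici a a Set.self_mem_Ici).eq_deriv _ hf hconst

theorem hasDerivAt_one_div_cosh_mul_zero (s : ℝ) :
    HasDerivAt (fun x => 1 / cosh (x * s)) 0 0 := by
  have h := (((hasDerivAt_id (0 : ℝ)).mul_const s).cosh).inv (cosh_pos _).ne'
  simp only [one_div]
  exact h.congr_deriv (by simp)

theorem hasDerivAt_rayFactor_zero (m : ℕ) (l : ℕ → ℝ) (s : ℝ) (j : ℕ) :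
    HasDerivAt (rayFactor m l s j) (-s * rayCoeff m l s j) 0 := by
  unfold rayFactor rayCoeff
  split_ifs
  · have h := ((((hasDerivAt_id' (0 : ℝ)).const_sub (l j)).mul_const s).sinh).div_const
      (sinh (l j * s))
    exact h.congr_deriv (by rw [sub_zero]; ring)
  · have h := (((hasDerivAt_id (0 : ℝ)).mul_const s).neg).exp
    exact h.congr_deriv (by simp)

theorem hasDerivWithinAt_renewal_rhs {Ψ : ℝ → ℝ} {Ψ' : ℝ}
    (hΨ : HasDerivWithinAt Ψ Ψ' (Set.Ici 0) 0)
    (a b G : ℝ) (T : Finset ℕ) (p : ℕ → ℝ) (m : ℕ) (l : ℕ → ℝ) (s : ℝ) :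
    HasDerivWithinAt
      (fun x => a * (1 - 1 / cosh (x * s)) + b * (1 / cosh (x * s)) * Ψ x
        + G * ∑ j ∈ T, p j * (1 / cosh (x * s)) * rayFactor m l s j x)
      (b * Ψ' - G * s * ∑ j ∈ T, p j * rayCoeff m l s j) (Set.Ici 0) 0 := by
  have hsech := hasDerivAt_one_div_cosh_mul_zero s
  have hsum : HasDerivAt (fun x => ∑ j ∈ T, p j * (1 / cosh (x * s)) * rayFactor m l s j x)
      (∑ j ∈ T, (p j * 0 * rayFactor m l s j 0
        + p j * (1 / cosh (0 * s)) * (-s * rayCoeff m l s j))) 0 :=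
    HasDerivAt.fun_sum fun j _ => (hsech.const_mul (p j)).mul (hasDerivAt_rayFactor_zero m l s j)
  have h := ((((hasDerivAt_const 0 1).sub hsech).const_mul a).hasDerivWithinAt.add
    ((hsech.const_mul b).hasDerivWithinAt.mul hΨ)).add (hsum.const_mul G).hasDerivWithinAt
  refine h.congr_deriv ?_
  simp only [zero_mul, mul_zero, zero_add, sub_zero, cosh_zero, div_one, mul_one, mul_sum]
  rw [sub_eq_add_neg, ← sum_neg_distrib]
  exact congrArg _ (sum_congr rfl fun j _ => by ring)

theorem one_le_rayCoeff {m : ℕ} {l : ℕ → ℝ} {s : ℝ} (hs : 0 < s) {j : ℕ} (hj : 1 ≤ j)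
    (hl : ∀ i ∈ Icc 1 m, 0 < l i) : 1 ≤ rayCoeff m l s j := by
  unfold rayCoeff
  split_ifs with hjm
  · have hsinh : 0 < sinh (l j * s) :=
      sinh_pos_iff.mpr (mul_pos (hl j (mem_Icc.mpr ⟨hj, hjm⟩)) hs)
    rw [le_div_iff₀ hsinh, one_mul]
    exact (sinh_lt_cosh _).le
  · exact le_rfl

theorem one_le_sum_mul_rayCoeff {M m : ℕ} {p l : ℕ → ℝ} {s : ℝ} (hs : 0 < s)
    (hp : ∀ j ∈ Icc 1 M, 0 ≤ p j) (hpsum : ∑ j ∈ Icc 1 M, p j = 1)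
    (hl : ∀ j ∈ Icc 1 m, 0 < l j) : 1 ≤ ∑ j ∈ Icc 1 M, p j * rayCoeff m l s j := by
  rw [← hpsum]
  refine sum_le_sum fun j hj => ?_
  simpa using mul_le_mul_of_nonneg_left
    (one_le_rayCoeff hs (mem_Icc.mp hj).1 hl) (hp j hj)

theorem sum_mul_rayCoeff_eq {M m : ℕ} (hmM : m ≤ M) (p l : ℕ → ℝ) (s : ℝ) :
    ∑ j ∈ Icc 1 M, p j * rayCoeff m l s j
      = ∑ j ∈ Icc 1 m, p j * (cosh (l j * s) / sinh (l j * s)) + ∑ j ∈ Icc (m + 1) M, p j := by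
  have hIoc (n : ℕ) : Icc 1 n = Ioc 0 n := Icc_add_one_left_eq_Ioc 0 n
  rw [hIoc, hIoc, Icc_add_one_left_eq_Ioc, ← sum_Ioc_consecutive _ (Nat.zero_le m) hmM]
  congr 1
  · exact sum_congr rfl fun j hj => by simp [rayCoeff, (mem_Ioc.mp hj).2]
  · exact sum_congr rfl fun j hj => by simp [rayCoeff, not_le.mpr (mem_Ioc.mp hj).1]

theorem walsh_laplace_renewal_identity_general
    (lam : ℝ) (hlam : 0 < lam) (s : ℝ) (hs : s = Real.sqrt (2 * lam))
    (M m : ℕ) (hm : m < M)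
    (p : ℕ → ℝ) (hp : ∀ j ∈ Finset.Icc 1 M, 0 ≤ p j)
    (hpsum : ∑ j ∈ Finset.Icc 1 M, p j = 1)
    (l : ℕ → ℝ) (hl : ∀ j ∈ Finset.Icc 1 m, 0 < l j)
    (k : ℕ)
    (φ₀ Φ G : ℝ) (δ : ℝ) (hδ : 0 < δ)
    (Ψ : ℝ → ℝ) (hΨ : HasDerivWithinAt Ψ (Φ * s) (Set.Ici 0) 0)
    (heq : ∀ x : ℝ, 0 ≤ x → x < δ →
      G = (p k * φ₀ / lam) * (1 - 1 / Real.cosh (x * s))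
        + p k * (1 / Real.cosh (x * s)) * Ψ x
        + G * ∑ j ∈ Finset.Icc 1 M, p j * (1 / Real.cosh (x * s)) *
            (if j ≤ m then Real.sinh ((l j - x) * s) / Real.sinh (l j * s)
             else Real.exp (-(x * s)))) :
    G = p k * Φ /
      (∑ j ∈ Finset.Icc 1 m, p j * (Real.cosh (l j * s) / Real.sinh (l j * s))
        + ∑ j ∈ Finset.Icc (m + 1) M, p j) := by
  have hs0 : 0 < s := hs ▸ sqrt_pos.mpr (by linarith)
  have hE : 1 ≤ ∑ j ∈ Icc 1 M, p j * rayCoeff m l s j := one_le_sum_mul_rayCoeff hs0 hp hpsum hl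
  have hcrit : p k * (Φ * s) - G * s * ∑ j ∈ Icc 1 M, p j * rayCoeff m l s j = 0 :=
    (hasDerivWithinAt_renewal_rhs hΨ _ _ G _ p m l s).eq_zero_of_eqOn_Ico hδ
      fun x hx => (heq x hx.1 hx.2).symm
  rw [← sum_mul_rayCoeff_eq hm.le, eq_div_iff (by linarith)]
  have : s * (p k * Φ - G * ∑ j ∈ Icc 1 M, p j * rayCoeff m l s j) = 0 := by linarith
  linarith [(mul_eq_zero.mp this).resolve_left hs0.ne']

/-- the analytic core of Lemma 1, formula (8): solving the renewal
identity (11) by right-differentiation at `x = 0`. -/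
theorem walsh_laplace_renewal_identity
    (lam : ℝ) (hlam : 0 < lam) (s : ℝ) (hs : s = Real.sqrt (2 * lam))
    (M m : ℕ) (hM : 1 ≤ M) (hm : m < M)
    (p : ℕ → ℝ) (hp : ∀ j ∈ Finset.Icc 1 M, 0 ≤ p j)
    (hpsum : ∑ j ∈ Finset.Icc 1 M, p j = 1)
    (l : ℕ → ℝ) (hl : ∀ j ∈ Finset.Icc 1 m, 0 < l j)
    (k : ℕ) (hk1 : m + 1 ≤ k) (hk2 : k ≤ M)
    (φ₀ Φ G : ℝ) (δ : ℝ) (hδ : 0 < δ)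
    (Ψ : ℝ → ℝ) (hΨ : HasDerivWithinAt Ψ (Φ * s) (Set.Ici 0) 0)
    (heq : ∀ x : ℝ, 0 ≤ x → x < δ →
      G = (p k * φ₀ / lam) * (1 - 1 / Real.cosh (x * s))
        + p k * (1 / Real.cosh (x * s)) * Ψ x
        + G * ∑ j ∈ Finset.Icc 1 M, p j * (1 / Real.cosh (x * s)) *
            (if j ≤ m then Real.sinh ((l j - x) * s) / Real.sinh (l j * s)
             else Real.exp (-(x * s)))) :
    G = p k * Φ /
      (∑ j ∈ Finset.Icc 1 m, p j * (Real.cosh (l j * s) / Real.sinh (l j * s))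
        + ∑ j ∈ Finset.Icc (m + 1) M, p j) :=
  walsh_laplace_renewal_identity_general lam hlam s hs M m hm p hp hpsum l hl k φ₀ Φ G δ hδ Ψ hΨ heq
end

section
/- Fix λ > 0 and set s = √(2λ). Let M ≥ 1, 1 ≤ m < M, let p_1,…,p_M ≥ 0 with Σ_{j=1}^M p_j = 1, let l_1,…,l_m > 0, fix k ∈ {1,…,m}, and let G¹ ∈ ℝ. For x ≥ 0 define S(x) = 1/cosh(xs), R_j(x) = sinh((l_j − x)s)/sinh(l_j s) for 1 ≤ j ≤ m, R_j(x) = e^{−xs} for m < j ≤ M, and R¹_k(x) = sinh(xs)/sinh(l_k s). Suppose that for all x in some interval [0, δ) with δ > 0: G¹ = p_k S(x) R¹_k(x) + G¹·Σ_{j=1}^M p_j S(x) R_j(x). Then G¹ = p_k / (sinh(l_k s)·(Σ_{j=1}^m p_j coth(l_j s) + Σ_{j=m+1}^M p_j)). -/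
/-!
Dividing `sinh ((l - x) s) = sinh (l s) cosh (x s) - cosh (l s) sinh (x s)` and
`exp (-x s) = cosh (x s) - sinh (x s)` by `cosh (x s)`, both sides of the renewal identity
become affine in `tanh (x s)`: using `∑ p_j = 1`, the identity reads
`G = tanh (x s) · (p_k / sinh (l_k s) - G C) + G`, where `C` is the weighted sum of hyperbolic
cotangents in the conclusion. A single `x ∈ (0, δ)` gives `tanh (x s) ≠ 0`, hence
`G C = p_k / sinh (l_k s)`, and `C ≥ ∑ p_j = 1` because `coth ≥ 1` on `(0, ∞)`.
-/

open Real Finset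

theorem Finset.sum_Icc_add_sum_Icc_succ {β : Type*} [AddCommMonoid β] (f : ℕ → β)
    {a m M : ℕ} (ha : a ≤ m + 1) (hm : m ≤ M) :
    ∑ j ∈ Icc a m, f j + ∑ j ∈ Icc (m + 1) M, f j = ∑ j ∈ Icc a M, f j := by
  simpa only [Ico_add_one_right_eq_Icc] using sum_Ico_consecutive f ha (Nat.add_le_add_right hm 1)

theorem one_le_sum_mul_of_one_le {ι : Type*} (t : Finset ι) {p c : ι → ℝ}
    (hp : ∀ j ∈ t, 0 ≤ p j) (hpsum : ∑ j ∈ t, p j = 1) (hc : ∀ j ∈ t, 1 ≤ c j) :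
    1 ≤ ∑ j ∈ t, p j * c j :=
  hpsum ▸ sum_le_sum fun j hj => le_mul_of_one_le_right (hp j hj) (hc j hj)

theorem mul_eq_of_eq_mul_add_mul_one_sub {G a t C : ℝ} (ht : t ≠ 0)
    (h : G = t * a + G * (1 - t * C)) : G * C = a := by
  have : t * (a - G * C) = 0 := by linear_combination -h
  linear_combination -(mul_eq_zero.mp this).resolve_left ht

namespace Real

theorem one_le_cosh_div_sinh {a : ℝ} (ha : 0 < a) : 1 ≤ cosh a / sinh a :=
  (one_le_div₀ (sinh_pos_iff.mpr ha)).mpr (sinh_lt_cosh a).le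

theorem one_div_cosh_mul_sinh_sub_div_sinh (a b : ℝ) (ha : sinh a ≠ 0) :
    1 / cosh b * (sinh (a - b) / sinh a) = 1 - tanh b * (cosh a / sinh a) := by
  rw [sinh_sub, tanh_eq_sinh_div_cosh]
  field_simp

theorem one_div_cosh_mul_exp_neg (b : ℝ) : 1 / cosh b * exp (-b) = 1 - tanh b := by
  rw [← cosh_sub_sinh, tanh_eq_sinh_div_cosh]
  field_simp

end Real

/-- `coth (l_j s)` on the `m` edges of finite length `l_j`, and `1 = coth ∞` on the
remaining, infinite, edges. -/
noncomputable def edgeCoth (m : ℕ) (l : ℕ → ℝ) (s : ℝ) (j : ℕ) : ℝ :=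
  if j ≤ m then cosh (l j * s) / sinh (l j * s) else 1

theorem one_div_cosh_mul_ite_eq_one_sub_tanh_mul_edgeCoth (m : ℕ) (l : ℕ → ℝ) (s x : ℝ) {j : ℕ}
    (hj : j ≤ m → sinh (l j * s) ≠ 0) :
    1 / cosh (x * s) *
        (if j ≤ m then sinh ((l j - x) * s) / sinh (l j * s) else exp (-(x * s))) =
      1 - tanh (x * s) * edgeCoth m l s j := by
  unfold edgeCoth
  split_ifs with hjm
  · rw [sub_mul, one_div_cosh_mul_sinh_sub_div_sinh _ _ (hj hjm)]
  · rw [one_div_cosh_mul_exp_neg, mul_one]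

theorem one_le_edgeCoth {m : ℕ} {l : ℕ → ℝ} {s : ℝ} (hs : 0 < s) {j : ℕ}
    (hl : j ≤ m → 0 < l j) : 1 ≤ edgeCoth m l s j := by
  unfold edgeCoth
  split_ifs with hjm
  · exact one_le_cosh_div_sinh (mul_pos (hl hjm) hs)
  · exact le_rfl

theorem sum_mul_edgeCoth (p l : ℕ → ℝ) (s : ℝ) {m M : ℕ} (hm : m ≤ M) :
    ∑ j ∈ Icc 1 M, p j * edgeCoth m l s j =
      ∑ j ∈ Icc 1 m, p j * (cosh (l j * s) / sinh (l j * s)) + ∑ j ∈ Icc (m + 1) M, p j := by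
  rw [← sum_Icc_add_sum_Icc_succ _ (Nat.le_add_left 1 m) hm]
  congr 1 <;> refine sum_congr rfl fun j hj => ?_ <;> obtain ⟨hj1, hj2⟩ := mem_Icc.mp hj
  · rw [edgeCoth, if_pos hj2]
  · rw [edgeCoth, if_neg (by omega), mul_one]

theorem walsh_exit_law_renewal_identity_general
    (lam : ℝ) (hlam : 0 < lam) (s : ℝ) (hs : s = Real.sqrt (2 * lam))
    (M m : ℕ) (hm : m < M)
    (p : ℕ → ℝ) (hp : ∀ j ∈ Finset.Icc 1 M, 0 ≤ p j)
    (hpsum : ∑ j ∈ Finset.Icc 1 M, p j = 1)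
    (l : ℕ → ℝ) (hl : ∀ j ∈ Finset.Icc 1 m, 0 < l j)
    (k : ℕ)
    (G₁ : ℝ) (δ : ℝ) (hδ : 0 < δ)
    (heq : ∀ x : ℝ, 0 ≤ x → x < δ →
      G₁ = p k * (1 / Real.cosh (x * s)) * (Real.sinh (x * s) / Real.sinh (l k * s))
        + G₁ * ∑ j ∈ Finset.Icc 1 M, p j * (1 / Real.cosh (x * s)) *
            (if j ≤ m then Real.sinh ((l j - x) * s) / Real.sinh (l j * s)
             else Real.exp (-(x * s)))) :
    G₁ = p k / (Real.sinh (l k * s) *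
      (∑ j ∈ Finset.Icc 1 m, p j * (Real.cosh (l j * s) / Real.sinh (l j * s))
        + ∑ j ∈ Finset.Icc (m + 1) M, p j)) := by
  have hs0 : 0 < s := hs ▸ sqrt_pos.mpr (by positivity)
  have hl' : ∀ j ∈ Icc 1 M, j ≤ m → 0 < l j := fun j hj hjm =>
    hl j (mem_Icc.mpr ⟨(mem_Icc.mp hj).1, hjm⟩)
  obtain ⟨x, hx, hxδ⟩ : ∃ x, 0 < x ∧ x < δ := ⟨δ / 2, half_pos hδ, half_lt_self hδ⟩
  set C := ∑ j ∈ Icc 1 M, p j * edgeCoth m l s j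
  have hC : 1 ≤ C := one_le_sum_mul_of_one_le _ hp hpsum fun j hj => one_le_edgeCoth hs0 (hl' j hj)
  have htanh : tanh (x * s) ≠ 0 := by
    rw [tanh_eq_sinh_div_cosh]
    exact (div_pos (sinh_pos_iff.mpr (mul_pos hx hs0)) (cosh_pos _)).ne'
  have hsource : p k * (1 / cosh (x * s)) * (sinh (x * s) / sinh (l k * s)) =
      tanh (x * s) * (p k / sinh (l k * s)) := by
    rw [tanh_eq_sinh_div_cosh]
    ring
  have hkernel : ∑ j ∈ Icc 1 M, p j * (1 / cosh (x * s)) *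
      (if j ≤ m then sinh ((l j - x) * s) / sinh (l j * s) else exp (-(x * s))) =
      1 - tanh (x * s) * C := by
    calc _ = ∑ j ∈ Icc 1 M, (p j - tanh (x * s) * (p j * edgeCoth m l s j)) := by
          refine sum_congr rfl fun j hj => ?_
          rw [mul_assoc, one_div_cosh_mul_ite_eq_one_sub_tanh_mul_edgeCoth m l s _ fun hjm => (sinh_pos_iff.mpr
            (mul_pos (hl' j hj hjm) hs0)).ne']
          ring
      _ = 1 - tanh (x * s) * C := by rw [sum_sub_distrib, ← mul_sum, hpsum]
  have hrenewal := heq (x) (by positivity) (by linarith)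
  rw [hsource, hkernel] at hrenewal
  rw [← sum_mul_edgeCoth p l s hm.le, ← div_div, eq_div_iff (zero_lt_one.trans_le hC).ne']
  exact mul_eq_of_eq_mul_add_mul_one_sub htanh hrenewal

/-- the analytic core of Lemma 1, formula (9): solving the renewal
identity (13) by right-differentiation at `x = 0`. -/
theorem walsh_exit_law_renewal_identity
    (lam : ℝ) (hlam : 0 < lam) (s : ℝ) (hs : s = Real.sqrt (2 * lam))
    (M m : ℕ) (hM : 1 ≤ M) (hm1 : 1 ≤ m) (hm : m < M)
    (p : ℕ → ℝ) (hp : ∀ j ∈ Finset.Icc 1 M, 0 ≤ p j)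
    (hpsum : ∑ j ∈ Finset.Icc 1 M, p j = 1)
    (l : ℕ → ℝ) (hl : ∀ j ∈ Finset.Icc 1 m, 0 < l j)
    (k : ℕ) (hk1 : 1 ≤ k) (hk2 : k ≤ m)
    (G₁ : ℝ) (δ : ℝ) (hδ : 0 < δ)
    (heq : ∀ x : ℝ, 0 ≤ x → x < δ →
      G₁ = p k * (1 / Real.cosh (x * s)) * (Real.sinh (x * s) / Real.sinh (l k * s))
        + G₁ * ∑ j ∈ Finset.Icc 1 M, p j * (1 / Real.cosh (x * s)) *
            (if j ≤ m then Real.sinh ((l j - x) * s) / Real.sinh (l j * s)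
             else Real.exp (-(x * s)))) :
    G₁ = p k / (Real.sinh (l k * s) *
      (∑ j ∈ Finset.Icc 1 m, p j * (Real.cosh (l j * s) / Real.sinh (l j * s))
        + ∑ j ∈ Finset.Icc (m + 1) M, p j)) :=
  walsh_exit_law_renewal_identity_general lam hlam s hs M m hm p hp hpsum l hl k G₁ δ hδ heq
end

section
/- Let m ≥ 1, let q_1,…,q_m ≥ 0 and l_1,…,l_m > 0 with S := Σ_{j=1}^m q_j/l_j > 0, let c ∈ ℝ, and fix k ∈ {1,…,m}. Then lim_{ε→0+} (1/ε)·[ (q_k/sinh(l_k ε))·(Σ_{j=1}^m q_j coth(l_j ε) + c)^{−1} − (q_k/l_k)/S ] = − c·(q_k/l_k)/S². -/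
/-!
For `x > 0` the mean value theorem gives `x ≤ sinh x ≤ x cosh x` and `cosh x - 1 ≤ x sinh x`,
hence `x / sinh x = 1 + O(x²)` and `x coth x = 1 + O(x²)`. Multiplying numerator and
denominator by `ε`, the quantity is `N ε / D ε` with `N ε = q_k / l_k + o(ε)` and
`D ε = S + c ε + o(ε)`, and the quotient rule for such first-order expansions gives the slope
`(0 · S - (q_k / l_k) c) / S²`.
-/

open Real Finset Filter Topology

namespace Real

theorem sinh_le_mul_cosh {x : ℝ} (hx : 0 ≤ x) : sinh x ≤ x * cosh x := by
  have h := (convex_Icc 0 x).image_sub_le_mul_sub_of_deriv_le continuous_sinh.continuousOn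
    differentiable_sinh.differentiableOn (C := cosh x) (fun y hy => by
      rw [interior_Icc] at hy
      rw [deriv_sinh, cosh_le_cosh, abs_of_pos hy.1, abs_of_nonneg hx]
      exact hy.2.le) 0 (Set.left_mem_Icc.2 hx) x (Set.right_mem_Icc.2 hx) hx
  simpa [mul_comm] using h

theorem cosh_sub_one_le_mul_sinh {x : ℝ} (hx : 0 ≤ x) : cosh x - 1 ≤ x * sinh x := by
  have h := (convex_Icc 0 x).image_sub_le_mul_sub_of_deriv_le continuous_cosh.continuousOn
    differentiable_cosh.differentiableOn (C := sinh x) (fun y hy => by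
      rw [interior_Icc] at hy
      rw [deriv_cosh, sinh_le_sinh]
      exact hy.2.le) 0 (Set.left_mem_Icc.2 hx) x (Set.right_mem_Icc.2 hx) hx
  simpa [mul_comm] using h

theorem abs_div_sinh_sub_one_le {x : ℝ} (hx : 0 < x) : |x / sinh x - 1| ≤ x ^ 2 := by
  have hs : 0 < sinh x := sinh_pos_iff.2 hx
  have h₁ : x ≤ sinh x := self_le_sinh_iff.2 hx.le
  have h₂ := sinh_le_mul_cosh hx.le
  have h₃ := cosh_sub_one_le_mul_sinh hx.le
  rw [abs_le, div_sub_one hs.ne', le_div_iff₀ hs, div_le_iff₀ hs]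
  constructor <;> nlinarith

theorem abs_mul_cosh_div_sinh_sub_one_le {x : ℝ} (hx : 0 < x) :
    |x * (cosh x / sinh x) - 1| ≤ x ^ 2 := by
  have hs : 0 < sinh x := sinh_pos_iff.2 hx
  have h₁ : x ≤ sinh x := self_le_sinh_iff.2 hx.le
  have h₂ := sinh_le_mul_cosh hx.le
  have h₃ := cosh_sub_one_le_mul_sinh hx.le
  rw [abs_le, ← mul_div_assoc, div_sub_one hs.ne', le_div_iff₀ hs, div_le_iff₀ hs]
  constructor <;> nlinarith

end Real

theorem tendsto_div_nhds_zero_of_abs_le_mul_sq {l : Filter ℝ} (hl : l ≤ 𝓝 0) {f : ℝ → ℝ}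
    {C : ℝ} (hf : ∀ᶠ x in l, |f x| ≤ C * x ^ 2) : Tendsto (fun x => f x / x) l (𝓝 0) := by
  have hO : f =O[l] fun x => x ^ 2 :=
    .of_bound C (hf.mono fun x hx => by simpa [abs_of_nonneg (sq_nonneg x)] using hx)
  exact (hO.trans_isLittleO ((Asymptotics.isLittleO_pow_id one_lt_two).mono hl)).tendsto_div_nhds_zero

theorem Filter.Tendsto.div_sub_div_div_self {l : Filter ℝ} (hl : l ≤ 𝓝[≠] 0) {N D : ℝ → ℝ}
    {N₀ N₁ D₀ D₁ : ℝ} (hN : Tendsto (fun ε => (N ε - N₀) / ε) l (𝓝 N₁))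
    (hD : Tendsto (fun ε => (D ε - D₀) / ε) l (𝓝 D₁)) (hD₀ : D₀ ≠ 0) :
    Tendsto (fun ε => (N ε / D ε - N₀ / D₀) / ε) l (𝓝 ((N₁ * D₀ - N₀ * D₁) / (D₀ * D₀))) := by
  have hne : ∀ᶠ ε in l, ε ≠ 0 := hl self_mem_nhdsWithin
  have hDlim : Tendsto D l (𝓝 D₀) := by
    have hε : Tendsto (fun ε : ℝ => ε) l (𝓝 0) := tendsto_id.mono_left (hl.trans nhdsWithin_le_nhds)
    have h := (hε.mul hD).const_add D₀
    rw [zero_mul, add_zero] at h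
    refine h.congr' (hne.mono fun ε hε => ?_)
    field_simp
    ring
  refine (((hN.mul_const D₀).sub (hD.const_mul N₀)).div (hDlim.mul_const D₀)
    (mul_ne_zero hD₀ hD₀)).congr' ?_
  filter_upwards [hne, hDlim.eventually_ne hD₀] with ε hε hDε
  simp only [Pi.div_apply]
  field_simp
  ring

theorem tendsto_mul_div_sinh_sub_div (q : ℝ) {l : ℝ} (hl : 0 < l) :
    Tendsto (fun ε => (ε * (q / sinh (l * ε)) - q / l) / ε) (𝓝[>] 0) (𝓝 0) := by
  have h : Tendsto (fun ε => q / l * ((l * ε / sinh (l * ε) - 1) / ε)) (𝓝[>] 0) (𝓝 0) := by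
    simpa using (tendsto_div_nhds_zero_of_abs_le_mul_sq (C := l ^ 2)
      (nhdsWithin_le_nhds (s := Set.Ioi 0)) (eventually_mem_nhdsWithin.mono
        fun ε (hε : 0 < ε) => by
          simpa [mul_pow] using abs_div_sinh_sub_one_le (mul_pos hl hε))).const_mul (q / l)
  refine h.congr' (eventually_mem_nhdsWithin.mono fun ε (hε : 0 < ε) => ?_)
  have := (sinh_pos_iff.2 (mul_pos hl hε)).ne'
  field_simp

theorem tendsto_mul_sum_cosh_div_sinh_add_sub_div {ι : Type*} (s : Finset ι) (q l : ι → ℝ)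
    (hl : ∀ j ∈ s, 0 < l j) (c : ℝ) :
    Tendsto (fun ε => (ε * (∑ j ∈ s, q j * (cosh (l j * ε) / sinh (l j * ε)) + c)
      - ∑ j ∈ s, q j / l j) / ε) (𝓝[>] 0) (𝓝 c) := by
  have hterm : ∀ j ∈ s, Tendsto
      (fun ε => q j / l j * ((l j * ε * (cosh (l j * ε) / sinh (l j * ε)) - 1) / ε))
      (𝓝[>] 0) (𝓝 0) := fun j hj => by
    simpa using (tendsto_div_nhds_zero_of_abs_le_mul_sq (C := l j ^ 2)
      (nhdsWithin_le_nhds (s := Set.Ioi 0)) (eventually_mem_nhdsWithin.mono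
        fun ε (hε : 0 < ε) => by
          simpa [mul_pow] using abs_mul_cosh_div_sinh_sub_one_le (mul_pos (hl j hj) hε))).const_mul
      (q j / l j)
  have h := (tendsto_finsetSum s hterm).add_const c
  rw [sum_const_zero, zero_add] at h
  refine h.congr' (eventually_mem_nhdsWithin.mono fun ε (hε : 0 < ε) => ?_)
  have hterm_eq : ∀ j ∈ s, q j / l j * ((l j * ε * (cosh (l j * ε) / sinh (l j * ε)) - 1) / ε) =
      q j * (cosh (l j * ε) / sinh (l j * ε)) - q j / l j / ε := fun j hj => by
    have := (hl j hj).ne'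
    field_simp
  dsimp only
  rw [sum_congr rfl hterm_eq, sum_sub_distrib, ← sum_div, sub_div, mul_div_cancel_left₀ _ hε.ne']
  ring

theorem coth_sum_inverse_second_order_asymptotics_general
    (m : ℕ) (q l : ℕ → ℝ)
    (hl : ∀ j ∈ Finset.Icc 1 m, 0 < l j)
    (S : ℝ) (hS : S = ∑ j ∈ Finset.Icc 1 m, q j / l j) (hSpos : 0 < S) (c : ℝ)
    (k : ℕ) (hk1 : 1 ≤ k) (hk2 : k ≤ m) :
    Tendsto (fun ε : ℝ => (1 / ε) *
        ((q k / Real.sinh (l k * ε)) *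
            (∑ j ∈ Finset.Icc 1 m, q j * (Real.cosh (l j * ε) / Real.sinh (l j * ε)) + c)⁻¹
          - (q k / l k) / S))
      (𝓝[>] 0) (𝓝 (-(c * ((q k / l k) / S ^ 2)))) := by
  subst hS
  have h := (tendsto_mul_div_sinh_sub_div (q k) (hl k (mem_Icc.2 ⟨hk1, hk2⟩))).div_sub_div_div_self
    (nhdsGT_le_nhdsNE 0) (tendsto_mul_sum_cosh_div_sinh_add_sub_div _ q l hl c) hSpos.ne'
  rw [show ∀ N₀ S : ℝ, (0 * S - N₀ * c) / (S * S) = -(c * (N₀ / S ^ 2)) from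
    fun _ _ => by ring] at h
  refine h.congr' (eventually_mem_nhdsWithin.mono fun ε (hε : 0 < ε) => ?_)
  rw [mul_div_mul_left _ _ hε.ne', div_eq_mul_inv (q k / _)]
  exact (one_div_mul_eq_div _ _).symm

/-- second-order asymptotics underlying formula (15). -/
theorem coth_sum_inverse_second_order_asymptotics
    (m : ℕ) (hm : 1 ≤ m) (q l : ℕ → ℝ)
    (hq : ∀ j ∈ Finset.Icc 1 m, 0 ≤ q j) (hl : ∀ j ∈ Finset.Icc 1 m, 0 < l j)
    (S : ℝ) (hS : S = ∑ j ∈ Finset.Icc 1 m, q j / l j) (hSpos : 0 < S) (c : ℝ)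
    (k : ℕ) (hk1 : 1 ≤ k) (hk2 : k ≤ m) :
    Tendsto (fun ε : ℝ => (1 / ε) *
        ((q k / Real.sinh (l k * ε)) *
            (∑ j ∈ Finset.Icc 1 m, q j * (Real.cosh (l j * ε) / Real.sinh (l j * ε)) + c)⁻¹
          - (q k / l k) / S))
      (𝓝[>] 0) (𝓝 (-(c * ((q k / l k) / S ^ 2)))) :=
  coth_sum_inverse_second_order_asymptotics_general m q l hl S hS hSpos c k hk1 hk2
end
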